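/- Let F be a convex class of probability measures on Ω, let A ⊆ ℝ^k be closed, and let T : F → A be surjective and mixture-continuous. If S : A × Ω → ℝ is strictly F-consistent for T and the expected score S̄(·,F) : A → ℝ is continuous for every F ∈ F, then S is F-self-calibrated for T: for all ε > 0 and all F ∈ F there is δ = δ(ε,F) > 0 such that for all x ∈ A and t = T(F), S̄(x,F) − S̄(t,F) < δ implies ‖t − x‖ < ε. -/

import Mathlib

/-! Expected scores are affine along the mixture path `λ ↦ (1 - λ) F + λ G`, so consistency at
the mixture and at `G` forces `S̄(T((1 - λ) F + λ G), F) ≤ S̄(T G, F)`. If `‖T F - x‖ ≥ ε` and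
`T G = x`, mixture-continuity and the intermediate value theorem give a point of this path whose
functional lies on the sphere of radius `ε` about `T F`; hence any `x` far from `T F` scores no
better than some point of the compact set `A ∩ sphere (T F) ε`. On that set `S̄(·, F) - S̄(T F, F)`
is continuous and, by strict consistency, positive, so it is bounded below by some `δ > 0`. -/

open MeasureTheory ENNReal

noncomputable def escore {α Ω : Type*} [MeasurableSpace Ω]
    (S : α → Ω → ℝ) (x : α) (F : Measure Ω) : ℝ :=
  ∫ y, S x y ∂F

/-- The mixture `(1 - lam) • F + lam • G` of two measures. -/
noncomputable def mix {Ω : Type*} [MeasurableSpace Ω]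
    (F G : Measure Ω) (lam : ℝ) : Measure Ω :=
  ENNReal.ofReal (1 - lam) • F + ENNReal.ofReal lam • G

/-- The class `𝓕` is convex (closed under mixtures). -/
def MixConvex {Ω : Type*} [MeasurableSpace Ω] (𝓕 : Set (Measure Ω)) : Prop :=
  ∀ F ∈ 𝓕, ∀ G ∈ 𝓕, ∀ lam ∈ Set.Icc (0:ℝ) 1, mix F G lam ∈ 𝓕

/-- `S` is an `𝓕`-consistent scoring function for `T` on the action domain `A`. -/
def Consistent {α Ω : Type*} [MeasurableSpace Ω]
    (𝓕 : Set (Measure Ω)) (A : Set α) (T : Measure Ω → α) (S : α → Ω → ℝ) : Prop :=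
  ∀ F ∈ 𝓕, ∀ x ∈ A, escore S (T F) F ≤ escore S x F

/-- `S` is a strictly `𝓕`-consistent scoring function for `T` on the action domain `A`. -/
def StrictlyConsistent {α Ω : Type*} [MeasurableSpace Ω]
    (𝓕 : Set (Measure Ω)) (A : Set α) (T : Measure Ω → α) (S : α → Ω → ℝ) : Prop :=
  Consistent 𝓕 A T S ∧
    ∀ F ∈ 𝓕, ∀ x ∈ A, escore S x F = escore S (T F) F → x = T F

/-- `T` is mixture-continuous: `fun lam => T ((1-lam) • F + lam • G)` is continuous on `[0,1]`. -/
def MixContinuous {Ω : Type*} [MeasurableSpace Ω] {k : ℕ}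
    (𝓕 : Set (Measure Ω)) (T : Measure Ω → (Fin k → ℝ)) : Prop :=
  ∀ F ∈ 𝓕, ∀ G ∈ 𝓕, ContinuousOn (fun lam => T (mix F G lam)) (Set.Icc (0:ℝ) 1)

theorem exists_pos_forall_norm_sub_lt_of_reduce_to_sphere {E : Type*} [NormedAddCommGroup E]
    [ProperSpace E] {A : Set E} (hA : IsClosed A) {f : E → ℝ} (hf : ContinuousOn f A) {t : E}
    (hmin : ∀ y ∈ A, y ≠ t → f t < f y) {ε : ℝ} (hε : 0 < ε)
    (hred : ∀ x ∈ A, ε ≤ ‖t - x‖ → ∃ y ∈ A, ‖t - y‖ = ε ∧ f y ≤ f x) :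
    ∃ δ > 0, ∀ x ∈ A, f x - f t < δ → ‖t - x‖ < ε := by
  have hK : IsCompact (A ∩ Metric.sphere t ε) := (isCompact_sphere t ε).inter_left hA
  have hgap : ∀ y ∈ A ∩ Metric.sphere t ε, 0 < f y - f t := fun y hy =>
    sub_pos.2 <| hmin y hy.1 fun h => hε.ne <| by simpa [h] using hy.2
  obtain ⟨δ, hδ, hδle⟩ := hK.exists_forall_le' (f := fun y => f y - f t)
    ((hf.mono Set.inter_subset_left).sub continuousOn_const) hgap
  refine ⟨δ, hδ, fun x hx hxδ => lt_of_not_ge fun hxε => ?_⟩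
  obtain ⟨y, hyA, hyε, hyx⟩ := hred x hx hxε
  have hy : y ∈ Metric.sphere t ε := by rwa [mem_sphere_iff_norm, norm_sub_rev]
  linarith [hδle y ⟨hyA, hy⟩]

section Mixture

variable {Ω : Type*} [MeasurableSpace Ω]

lemma mix_zero (F G : Measure Ω) : mix F G 0 = F := by
  simp [mix]

lemma mix_one (F G : Measure Ω) : mix F G 1 = G := by
  simp [mix]

lemma escore_mix {α : Type*} (S : α → Ω → ℝ) (z : α) (F G : Measure Ω) {lam : ℝ}
    (hlam : lam ∈ Set.Icc (0:ℝ) 1) (hF : Integrable (S z) F) (hG : Integrable (S z) G) :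
    escore S z (mix F G lam) = (1 - lam) * escore S z F + lam * escore S z G := by
  unfold escore mix
  rw [integral_add_measure (hF.smul_measure ofReal_ne_top) (hG.smul_measure ofReal_ne_top),
    integral_smul_measure, integral_smul_measure, toReal_ofReal (by linarith [hlam.2]),
    toReal_ofReal hlam.1, smul_eq_mul, smul_eq_mul]

end Mixture

theorem StrictlyConsistent.escore_lt {α Ω : Type*} [MeasurableSpace Ω] {𝓕 : Set (Measure Ω)}
    {A : Set α} {T : Measure Ω → α} {S : α → Ω → ℝ} (hS : StrictlyConsistent 𝓕 A T S)
    {F : Measure Ω} (hF : F ∈ 𝓕) {x : α} (hx : x ∈ A) (hxT : x ≠ T F) :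
    escore S (T F) F < escore S x F :=
  (hS.1 F hF x hx).lt_of_ne fun h => hxT (hS.2 F hF x hx h.symm)

theorem Consistent.escore_map_mix_le {α Ω : Type*} [MeasurableSpace Ω] {𝓕 : Set (Measure Ω)}
    {A : Set α} {T : Measure Ω → α} {S : α → Ω → ℝ} (hS : Consistent 𝓕 A T S)
    (hconv : MixConvex 𝓕) (hTA : ∀ F ∈ 𝓕, T F ∈ A)
    (hSint : ∀ x ∈ A, ∀ F ∈ 𝓕, Integrable (S x) F)
    {F G : Measure Ω} (hF : F ∈ 𝓕) (hG : G ∈ 𝓕) {lam : ℝ} (hlam : lam ∈ Set.Icc (0:ℝ) 1) :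
    escore S (T (mix F G lam)) F ≤ escore S (T G) F := by
  rcases hlam.2.eq_or_lt with rfl | hlt
  · rw [mix_one]
  have hH : mix F G lam ∈ 𝓕 := hconv F hF G hG lam hlam
  set x := T (mix F G lam)
  have hxA : x ∈ A := hTA _ hH
  have hgA : T G ∈ A := hTA G hG
  have hatH := hS _ hH _ hgA
  have hatG := hS G hG _ hxA
  rw [escore_mix S _ F G hlam (hSint _ hxA F hF) (hSint _ hxA G hG),
    escore_mix S _ F G hlam (hSint _ hgA F hF) (hSint _ hgA G hG)] at hatH
  have hscaled : (escore S x F - escore S (T G) F) * (1 - lam) ≤ 0 := by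
    nlinarith [mul_le_mul_of_nonneg_left hatG hlam.1]
  linarith [nonpos_of_mul_nonpos_left hscaled (by linarith)]

theorem exists_mem_sphere_escore_le {Ω : Type*} [MeasurableSpace Ω] {k : ℕ}
    {𝓕 : Set (Measure Ω)} (hconv : MixConvex 𝓕) {A : Set (Fin k → ℝ)}
    {T : Measure Ω → (Fin k → ℝ)} (hTA : ∀ F ∈ 𝓕, T F ∈ A) (hmix : MixContinuous 𝓕 T)
    (hsurj : ∀ x ∈ A, ∃ F ∈ 𝓕, T F = x) {S : (Fin k → ℝ) → Ω → ℝ}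
    (hSint : ∀ x ∈ A, ∀ F ∈ 𝓕, Integrable (S x) F) (hS : Consistent 𝓕 A T S)
    {F : Measure Ω} (hF : F ∈ 𝓕) {ε : ℝ} (hε : 0 ≤ ε) {x : Fin k → ℝ} (hx : x ∈ A)
    (hxε : ε ≤ ‖T F - x‖) :
    ∃ y ∈ A, ‖T F - y‖ = ε ∧ escore S y F ≤ escore S x F := by
  obtain ⟨G, hG, rfl⟩ := hsurj x hx
  have hpath : ContinuousOn (fun lam => ‖T F - T (mix F G lam)‖) (Set.Icc 0 1) :=
    (continuousOn_const.sub (hmix F hF G hG)).norm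
  have hεmem : ε ∈ Set.Icc ‖T F - T (mix F G 0)‖ ‖T F - T (mix F G 1)‖ := by
    rw [mix_zero, mix_one, sub_self, norm_zero]
    exact ⟨hε, hxε⟩
  obtain ⟨lam, hlam, hnorm⟩ := intermediate_value_Icc zero_le_one hpath hεmem
  exact ⟨_, hTA _ (hconv F hF G hG lam hlam), hnorm,
    hS.escore_map_mix_le hconv hTA hSint hF hG hlam⟩

theorem statement4_general {Ω : Type*} [MeasurableSpace Ω] {k : ℕ}
    (𝓕 : Set (Measure Ω))
    (hconv : MixConvex 𝓕)
    (A : Set (Fin k → ℝ)) (hAclosed : IsClosed A)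
    (T : Measure Ω → (Fin k → ℝ))
    (hTA : ∀ F ∈ 𝓕, T F ∈ A)
    (hmix : MixContinuous 𝓕 T)
    (hsurj : ∀ x ∈ A, ∃ F ∈ 𝓕, T F = x)
    (S : (Fin k → ℝ) → Ω → ℝ)
    (hSint : ∀ x ∈ A, ∀ F ∈ 𝓕, Integrable (S x) F)
    (hS : StrictlyConsistent 𝓕 A T S)
    (hcont : ∀ F ∈ 𝓕, ContinuousOn (fun x => escore S x F) A) :
    ∀ ε > (0:ℝ), ∀ F ∈ 𝓕, ∃ δ > (0:ℝ), ∀ x ∈ A,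
      escore S x F - escore S (T F) F < δ → ‖T F - x‖ < ε := by
  intro ε hε F hF
  exact exists_pos_forall_norm_sub_lt_of_reduce_to_sphere hAclosed (hcont F hF)
    (fun y hy hyT => hS.escore_lt hF hy hyT) hε
    (fun x hx hxε => exists_mem_sphere_escore_le hconv hTA hmix hsurj hSint hS.1 hF hε.le hx hxε)

/-- If `𝓕` is convex, `A` is closed, `T` is surjective and
mixture-continuous, `S` is strictly `𝓕`-consistent for `T`, and `S̄(·,F)` is continuous
on `A` for every `F ∈ 𝓕`, then `S` is `𝓕`-self-calibrated for `T`. -/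
theorem statement4 {Ω : Type*} [MeasurableSpace Ω] {k : ℕ}
    (𝓕 : Set (Measure Ω)) (hprob : ∀ F ∈ 𝓕, IsProbabilityMeasure F)
    (hconv : MixConvex 𝓕)
    (A : Set (Fin k → ℝ)) (hAclosed : IsClosed A)
    (T : Measure Ω → (Fin k → ℝ))
    (hTA : ∀ F ∈ 𝓕, T F ∈ A)
    (hmix : MixContinuous 𝓕 T)
    (hsurj : ∀ x ∈ A, ∃ F ∈ 𝓕, T F = x)
    (S : (Fin k → ℝ) → Ω → ℝ)
    (hSint : ∀ x ∈ A, ∀ F ∈ 𝓕, Integrable (S x) F)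
    (hS : StrictlyConsistent 𝓕 A T S)
    (hcont : ∀ F ∈ 𝓕, ContinuousOn (fun x => escore S x F) A) :
    ∀ ε > (0:ℝ), ∀ F ∈ 𝓕, ∃ δ > (0:ℝ), ∀ x ∈ A,
      escore S x F - escore S (T F) F < δ → ‖T F - x‖ < ε :=
  statement4_general 𝓕 hconv A hAclosed T hTA hmix hsurj S hSint hS hcont
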